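/- Fix an integer n ≥ 4, and let t = Σ_{i<j} aᵢaⱼ ∈ S. Then: (1) ψ_σ(t) = t for every σ ∈ Sₙ; (2) there is no polynomial P ∈ R with φ_σ(P) = P for all σ ∈ Sₙ and π(P) = t; (3) the polynomial P₀ = Σ_{i<j} (aᵢ⁺aⱼ⁺ + aᵢ⁻aⱼ⁻) satisfies φ_σ(P₀) = P₀ for all σ ∈ Sₙ and π(P₀) = 2t. In particular the map from Sₙ-invariants of R to Sₙ-invariants of S induced by π is not surjective, and its cokernel contains an element of order 2. -/

import Mathlib

/-! The polynomial `t` is the elementary symmetric polynomial `e₂`. Each `ψ_σ` is a renaming,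
followed for odd `σ` by `aᵢ ↦ -aᵢ`, which fixes the quadratic `e₂`; and `P₀` is `e₂` in the
`aᵢ⁺` plus `e₂` in the `aᵢ⁻`, two summands that `φ_σ` exchanges for odd `σ`.

For the obstruction, fix `i ≠ j`. The coefficient of `aᵢaⱼ` in `π(P)` is `∂ᵢ∂ⱼ π(P)` at `0`, and
by the chain rule `∂ᵢ ∘ π = π ∘ (∂ᵢ⁺ - ∂ᵢ⁻)` it equals `c₊₊ - c₊₋ - c₋₊ + c₋₋`, where `c_εδ` is
the coefficient of `aᵢ^ε aⱼ^δ` in `P`. As `n ≥ 4`, some transposition `σ` fixes `i` and `j`; it is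
odd, so `φ_σ` exchanges the signs of these variables and `φ_σ(P) = P` forces `c_εδ = c_{-ε,-δ}`.
Thus the coefficient is `2(c₊₊ - c₊₋)`, which is even, whereas in `t` it is `1`. -/

set_option synthInstance.maxHeartbeats 1000000
set_option maxHeartbeats 1000000

open MvPolynomial

/-- The signed permutation of the `2n` variables `aᵢ⁺ = (i, true)`, `aᵢ⁻ = (i, false)`
associated to `σ ∈ Sₙ`: it sends `aᵢ^ε` to `a_{σ(i)}^{ε·sgn σ}`. -/
def signedVar {n : ℕ} (σ : Equiv.Perm (Fin n)) (p : Fin n × Bool) : Fin n × Bool :=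
  (σ p.1, if Equiv.Perm.sign σ = 1 then p.2 else !p.2)

/-- The ring automorphism `φ_σ` of `R = ℤ[a₁⁺, a₁⁻, …, aₙ⁺, aₙ⁻]` induced by the signed
permutation action of `σ ∈ Sₙ` on the variables. -/
noncomputable def phi {n : ℕ} (σ : Equiv.Perm (Fin n)) :
    MvPolynomial (Fin n × Bool) ℤ →ₐ[ℤ] MvPolynomial (Fin n × Bool) ℤ :=
  MvPolynomial.rename (signedVar σ)

/-- The ring automorphism `ψ_σ` of `S = ℤ[a₁, …, aₙ]` with `ψ_σ(aᵢ) = a_{σ(i)}` for `σ`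
even and `ψ_σ(aᵢ) = −a_{σ(i)}` for `σ` odd. -/
noncomputable def psi {n : ℕ} (σ : Equiv.Perm (Fin n)) :
    MvPolynomial (Fin n) ℤ →ₐ[ℤ] MvPolynomial (Fin n) ℤ :=
  aeval (fun i : Fin n =>
    if Equiv.Perm.sign σ = 1 then (X (σ i) : MvPolynomial (Fin n) ℤ) else - X (σ i))

/-- The `ℤ`-algebra homomorphism `π : R → S = ℤ[a₁, …, aₙ]` with `π(aᵢ⁺) = aᵢ` and
`π(aᵢ⁻) = −aᵢ`. -/
noncomputable def piMap {n : ℕ} :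
    MvPolynomial (Fin n × Bool) ℤ →ₐ[ℤ] MvPolynomial (Fin n) ℤ :=
  aeval (fun p : Fin n × Bool => if p.2 then (X p.1 : MvPolynomial (Fin n) ℤ) else - X p.1)

open Finset

section

variable {ι R : Type*} [Fintype ι]

theorem sum_Ioi_X_mul_X_eq_esymm_two [CommSemiring R] [LinearOrder ι]
    [LocallyFiniteOrderTop ι] :
    ∑ i, ∑ j ∈ Ioi i, (X i * X j : MvPolynomial ι R) = esymm ι R 2 := by
  rw [esymm, sum_sigma']
  refine sum_bij (fun p _ => {p.1, p.2}) ?_ ?_ ?_ ?_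
  · rintro ⟨i, j⟩ hij
    simp only [mem_sigma, mem_Ioi] at hij
    exact mem_powersetCard_univ.2 (card_pair hij.2.ne)
  · rintro ⟨i, j⟩ hij ⟨k, l⟩ hkl h
    simp only [mem_sigma, mem_Ioi] at hij hkl
    simp only [Finset.ext_iff, mem_insert, mem_singleton] at h
    have := h i; have := h j; have := h k; have := h l
    simp only [Sigma.mk.injEq, heq_eq_eq]
    grind
  · intro s hs
    obtain ⟨i, j, hij, rfl⟩ := card_eq_two.1 (mem_powersetCard_univ.1 hs)
    rcases hij.lt_or_gt with h | h
    · exact ⟨⟨i, j⟩, by simpa using h, rfl⟩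
    · exact ⟨⟨j, i⟩, by simpa using h, pair_comm j i⟩
  · rintro ⟨i, j⟩ hij
    simp only [mem_sigma, mem_Ioi] at hij
    rw [prod_pair hij.2.ne]

theorem aeval_neg_X_esymm [CommRing R] (k : ℕ) :
    aeval (fun i => -X i) (esymm ι R k) = (-1) ^ k * esymm ι R k := by
  simp_rw [esymm, map_sum, map_prod, aeval_X, prod_neg, mul_sum]
  refine sum_congr rfl fun s hs => ?_
  rw [(mem_powersetCard.1 hs).2]

theorem coeff_sum_single_esymm [CommSemiring R] (s : Finset ι) :
    coeff (∑ i ∈ s, Finsupp.single i 1) (esymm ι R #s) = 1 := by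
  classical
  have hinj : ∀ t : Finset ι,
      (∑ i ∈ t, Finsupp.single i 1 = ∑ i ∈ s, Finsupp.single i 1) ↔ t = s := by
    refine fun t => ⟨fun h => ?_, fun h => h ▸ rfl⟩
    simpa using congrArg Finsupp.toMultiset h
  simp_rw [esymm_eq_sum_monomial, coeff_sum, coeff_monomial, hinj]
  simp

theorem coeff_single_add_single_eq_constantCoeff_pderiv {ι R : Type*} [CommSemiring R]
    {i j : ι} (hij : i ≠ j) (Q : MvPolynomial ι R) :
    coeff (Finsupp.single i 1 + Finsupp.single j 1) Q
      = constantCoeff (pderiv i (pderiv j Q)) := by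
  classical
  rw [constantCoeff_eq, coeff_pderiv, coeff_pderiv, zero_add]
  simp [hij]

end

section

variable {n : ℕ}

theorem psi_apply (σ : Equiv.Perm (Fin n)) (Q : MvPolynomial (Fin n) ℤ) :
    psi σ Q =
      if Equiv.Perm.sign σ = 1 then rename σ Q else aeval (fun i => -X i) (rename σ Q) := by
  split_ifs with h
  · simp only [psi, h, if_true, rename_eq_aeval]
    rfl
  · simp only [psi, h, if_false, aeval_rename]
    rfl

theorem psi_esymm_two (σ : Equiv.Perm (Fin n)) :
    psi σ (esymm (Fin n) ℤ 2) = esymm (Fin n) ℤ 2 := by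
  rw [psi_apply, rename_esymm, aeval_neg_X_esymm]
  simp

theorem piMap_rename_true (Q : MvPolynomial (Fin n) ℤ) :
    piMap (rename (fun i => (i, true)) Q) = Q := by
  rw [piMap, aeval_rename]
  exact aeval_X_left_apply Q

theorem piMap_rename_false (Q : MvPolynomial (Fin n) ℤ) :
    piMap (rename (fun i => (i, false)) Q) = aeval (fun i => -X i) Q := by
  rw [piMap, aeval_rename]
  rfl

theorem phi_rename_prodMk (σ : Equiv.Perm (Fin n)) (b : Bool) (Q : MvPolynomial (Fin n) ℤ) :
    phi σ (rename (fun i => (i, b)) Q)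
      = rename (fun i => (i, if Equiv.Perm.sign σ = 1 then b else !b)) (rename σ Q) := by
  simp only [phi, rename_rename]
  rfl

theorem sum_Ioi_X_mul_X_add_X_mul_X_eq_rename_esymm_two :
    ∑ i : Fin n, ∑ j ∈ Ioi i, (X (i, true) * X (j, true) + X (i, false) * X (j, false))
      = rename (fun i => (i, true)) (esymm (Fin n) ℤ 2)
        + rename (fun i => (i, false)) (esymm (Fin n) ℤ 2) := by
  simp_rw [← sum_Ioi_X_mul_X_eq_esymm_two, map_sum, map_mul, rename_X, ← sum_add_distrib]

theorem phi_rename_true_add_rename_false_esymm_two (σ : Equiv.Perm (Fin n)) :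
    phi σ (rename (fun i => (i, true)) (esymm (Fin n) ℤ 2)
        + rename (fun i => (i, false)) (esymm (Fin n) ℤ 2))
      = rename (fun i => (i, true)) (esymm (Fin n) ℤ 2)
        + rename (fun i => (i, false)) (esymm (Fin n) ℤ 2) := by
  rw [map_add, phi_rename_prodMk, phi_rename_prodMk, rename_esymm]
  split_ifs
  · rfl
  · exact add_comm _ _

theorem piMap_rename_true_add_rename_false_esymm_two :
    piMap (rename (fun i => (i, true)) (esymm (Fin n) ℤ 2)
        + rename (fun i => (i, false)) (esymm (Fin n) ℤ 2)) = 2 • esymm (Fin n) ℤ 2 := by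
  rw [map_add, piMap_rename_true, piMap_rename_false, aeval_neg_X_esymm, two_nsmul]
  simp

theorem pderiv_piMap (i : Fin n) (P : MvPolynomial (Fin n × Bool) ℤ) :
    pderiv i (piMap P) = piMap (pderiv (i, true) P - pderiv (i, false) P) := by
  induction P using MvPolynomial.induction_on with
  | C a => simp [piMap]
  | add p q hp hq =>
    simp only [map_add, map_sub, hp, hq]
    abel
  | mul_X p v h =>
    obtain ⟨j, b⟩ := v
    simp only [map_mul, Derivation.leibniz, pderiv_X, smul_eq_mul, h, map_add, map_sub]
    cases b <;> simp [piMap, Pi.single_apply] <;> ring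

theorem constantCoeff_piMap (P : MvPolynomial (Fin n × Bool) ℤ) :
    constantCoeff (piMap P) = constantCoeff P := by
  induction P using MvPolynomial.induction_on with
  | C a => simp [piMap]
  | add p q hp hq => simp only [map_add, hp, hq]
  | mul_X p v h => simp [piMap, apply_ite constantCoeff]

theorem signedVar_injective (σ : Equiv.Perm (Fin n)) : Function.Injective (signedVar σ) := by
  rintro ⟨i, b⟩ ⟨j, c⟩ h
  simp only [signedVar, Prod.mk.injEq, σ.injective.eq_iff] at h
  split_ifs at h <;> simp_all

theorem constantCoeff_pderiv_pderiv_of_phi_eq {σ : Equiv.Perm (Fin n)}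
    (hσ : Equiv.Perm.sign σ ≠ 1) {i j : Fin n} (hi : σ i = i) (hj : σ j = j)
    {P : MvPolynomial (Fin n × Bool) ℤ} (hP : phi σ P = P) (b c : Bool) :
    constantCoeff (pderiv (i, !b) (pderiv (j, !c) P))
      = constantCoeff (pderiv (i, b) (pderiv (j, c) P)) := by
  have hsv : ∀ k b, σ k = k → signedVar σ (k, b) = (k, !b) := fun k b hk => by
    simp [signedVar, hσ, hk]
  conv_lhs => rw [← hP, phi, ← hsv i b hi, ← hsv j c hj, pderiv_rename (signedVar_injective σ),
    pderiv_rename (signedVar_injective σ), constantCoeff_rename]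

theorem two_dvd_coeff_piMap {σ : Equiv.Perm (Fin n)}
    (hσ : Equiv.Perm.sign σ ≠ 1) {i j : Fin n} (hij : i ≠ j) (hi : σ i = i) (hj : σ j = j)
    {P : MvPolynomial (Fin n × Bool) ℤ} (hP : phi σ P = P) :
    2 ∣ coeff (Finsupp.single i 1 + Finsupp.single j 1) (piMap P) := by
  have h := constantCoeff_pderiv_pderiv_of_phi_eq hσ hi hj hP
  simp only [coeff_single_add_single_eq_constantCoeff_pderiv hij, pderiv_piMap, map_sub,
    constantCoeff_piMap]
  have h1 := h true true
  have h2 := h true false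
  simp only [Bool.not_true, Bool.not_false] at h1 h2
  omega

theorem not_exists_phi_invariant_piMap_eq_esymm_two (hn : 4 ≤ n) :
    ¬ ∃ P : MvPolynomial (Fin n × Bool) ℤ,
      (∀ σ : Equiv.Perm (Fin n), phi σ P = P) ∧ piMap P = esymm (Fin n) ℤ 2 := by
  rintro ⟨P, hP, hπ⟩
  let i : Fin n := ⟨0, by omega⟩
  let j : Fin n := ⟨1, by omega⟩
  let σ := Equiv.swap (⟨2, by omega⟩ : Fin n) ⟨3, by omega⟩
  have hij : i ≠ j := by simp [i, j, Fin.ext_iff]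
  have hσ : Equiv.Perm.sign σ ≠ 1 := by
    rw [Equiv.Perm.sign_swap (by simp [Fin.ext_iff])]
    decide
  have hi : σ i = i := by simp [σ, i, Equiv.swap_apply_def, Fin.ext_iff]
  have hj : σ j = j := by simp [σ, j, Equiv.swap_apply_def, Fin.ext_iff]
  have hodd := two_dvd_coeff_piMap hσ hij hi hj (hP σ)
  rw [hπ, ← sum_pair (f := fun k => Finsupp.single k 1) hij, ← card_pair hij,
    coeff_sum_single_esymm] at hodd
  omega

end

/-- Fix `n ≥ 4` and let `t = Σ_{i<j} aᵢaⱼ ∈ S`.  Then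
(1) `ψ_σ(t) = t` for every `σ ∈ Sₙ`;
(2) there is no `P ∈ R` with `φ_σ(P) = P` for all `σ` and `π(P) = t`;
(3) `P₀ = Σ_{i<j} (aᵢ⁺aⱼ⁺ + aᵢ⁻aⱼ⁻)` satisfies `φ_σ(P₀) = P₀` for all `σ` and
`π(P₀) = 2t`.
In particular the map induced by `π` from `Sₙ`-invariants of `R` to `Sₙ`-invariants of
`S` is not surjective, and its cokernel contains an element of order `2`. -/
theorem stmt6 (n : ℕ) (hn : 4 ≤ n) :
    (∀ σ : Equiv.Perm (Fin n),
      psi σ (∑ i : Fin n, ∑ j ∈ Finset.Ioi i, X i * X j)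
        = ∑ i : Fin n, ∑ j ∈ Finset.Ioi i, X i * X j) ∧
    (¬ ∃ P : MvPolynomial (Fin n × Bool) ℤ,
      (∀ σ : Equiv.Perm (Fin n), phi σ P = P) ∧
        piMap P = ∑ i : Fin n, ∑ j ∈ Finset.Ioi i, X i * X j) ∧
    ((∀ σ : Equiv.Perm (Fin n),
        phi σ (∑ i : Fin n, ∑ j ∈ Finset.Ioi i,
            (X (i, true) * X (j, true) + X (i, false) * X (j, false)))
          = ∑ i : Fin n, ∑ j ∈ Finset.Ioi i,
              (X (i, true) * X (j, true) + X (i, false) * X (j, false))) ∧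
      piMap (∑ i : Fin n, ∑ j ∈ Finset.Ioi i,
          (X (i, true) * X (j, true) + X (i, false) * X (j, false)))
        = 2 • (∑ i : Fin n, ∑ j ∈ Finset.Ioi i, X i * X j)) ∧
    (¬ ∀ Q : MvPolynomial (Fin n) ℤ, (∀ σ : Equiv.Perm (Fin n), psi σ Q = Q) →
      ∃ P : MvPolynomial (Fin n × Bool) ℤ,
        (∀ σ : Equiv.Perm (Fin n), phi σ P = P) ∧ piMap P = Q) ∧
    (∃ Q : MvPolynomial (Fin n) ℤ,
      (∀ σ : Equiv.Perm (Fin n), psi σ Q = Q) ∧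
      (¬ ∃ P : MvPolynomial (Fin n × Bool) ℤ,
        (∀ σ : Equiv.Perm (Fin n), phi σ P = P) ∧ piMap P = Q) ∧
      (∃ P : MvPolynomial (Fin n × Bool) ℤ,
        (∀ σ : Equiv.Perm (Fin n), phi σ P = P) ∧ piMap P = 2 • Q)) := by
  rw [sum_Ioi_X_mul_X_add_X_mul_X_eq_rename_esymm_two, sum_Ioi_X_mul_X_eq_esymm_two]
  have hψ := psi_esymm_two (n := n)
  have hno := not_exists_phi_invariant_piMap_eq_esymm_two hn
  have hφ := phi_rename_true_add_rename_false_esymm_two (n := n)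
  have hπ := piMap_rename_true_add_rename_false_esymm_two (n := n)
  exact ⟨hψ, hno, ⟨hφ, hπ⟩, fun hall => hno (hall _ hψ), _, hψ, hno, _, hφ, hπ⟩
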